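/- Criterion for strict semidomain: a nonzero metabelian Lie algebra A is a strict semidomain (D(A) = A²) if and only if A is nonabelian and A² is linear-torsion free, i.e., for all nonzero x,y ∈ A with x ∈ A² and y ∉ A² one has x∘y ≠ 0. -/

import Mathlib

/-- The (two-sided Lie) ideal of `A` generated by the single element `x`. -/
def lieIdealGen (k : Type*) [CommRing k] {A : Type*} [LieRing A] [LieAlgebra k A] (x : A) :
    LieIdeal k A :=
  LieSubmodule.lieSpan k A {x}

/-- Nonzero `x` and `y` form a pair of zero divisors: `⟨x⟩ ∘ ⟨y⟩ = 0`. -/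
def IsZeroDivPair (k : Type*) [CommRing k] {A : Type*} [LieRing A] [LieAlgebra k A]
    (x y : A) : Prop :=
  x ≠ 0 ∧ y ≠ 0 ∧ ∀ a ∈ lieIdealGen k x, ∀ b ∈ lieIdealGen k y, ⁅a, b⁆ = 0

/-- `x` is a zero divisor. -/
def IsLieZeroDivisor (k : Type*) [CommRing k] {A : Type*} [LieRing A] [LieAlgebra k A]
    (x : A) : Prop :=
  ∃ y, IsZeroDivPair k x y

/-- `D(A)`: all zero divisors of `A` together with `0`. -/
def DSet (k : Type*) [CommRing k] (A : Type*) [LieRing A] [LieAlgebra k A] : Set A :=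
  {x | x = 0 ∨ IsLieZeroDivisor k x}

/-- The Fitting radical: elements whose generated ideal is a nilpotent Lie algebra. -/
def FitSet (k : Type*) [CommRing k] (A : Type*) [LieRing A] [LieAlgebra k A] : Set A :=
  {x | LieModule.IsNilpotent (lieIdealGen k x) (lieIdealGen k x)}

/-- The commutant (derived ideal) `A²`. -/
def commutant (k : Type*) [CommRing k] (A : Type*) [LieRing A] [LieAlgebra k A] : LieIdeal k A :=
  ⁅(⊤ : LieIdeal k A), (⊤ : LieIdeal k A)⁆

/-- A Lie ring is metabelian if `(a∘b)∘(c∘d) = 0` identically. -/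
def IsMetabelianLie (A : Type*) [LieRing A] : Prop :=
  ∀ a b c d : A, ⁅⁅a, b⁆, ⁅c, d⁆⁆ = 0

/-- The commutant `A²` is linear-torsion free: nonzero `x ∈ A²` times `y ∉ A²` is nonzero. -/
def LTFree (k : Type*) [CommRing k] (A : Type*) [LieRing A] [LieAlgebra k A] : Prop :=
  ∀ x ∈ commutant k A, x ≠ 0 → ∀ y ∉ commutant k A, ⁅x, y⁆ ≠ 0

/-!
In a metabelian algebra `A²` is abelian, so a nonzero `x ∈ A²` kills its own ideal and `A² ⊆ D(A)`
always. If `x ∈ A²` is nonzero and `x∘y = 0`, then `x` centralizes `⟨y⟩ ⊆ k y + A²`, so `y` is a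
zero divisor; hence `D(A) = A²` forces linear-torsion freeness, and it forces `A` nonabelian since
otherwise every nonzero element is a zero divisor while `A² = 0`. Conversely, let `x ∉ A²` be a
zero divisor with partner `y`. Linear-torsion freeness gives `y ∉ A²`, then `u∘x = 0` for all `u`
(as `y` kills `u∘x ∈ A²`), and then `x` kills all of `A²`, so `A` is abelian.
-/

section

variable {R : Type*} [CommRing R] {L : Type*} [LieRing L] [LieAlgebra R L]

theorem mem_lieIdealGen_self (x : L) : x ∈ lieIdealGen R x :=
  LieSubmodule.subset_lieSpan rfl

theorem lieIdealGen_le_iff {x : L} {I : LieIdeal R L} : lieIdealGen R x ≤ I ↔ x ∈ I :=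
  LieSubmodule.lieSpan_le.trans Set.singleton_subset_iff

/-- The centralizer `LieModule.ker R L ⟨y⟩` of an ideal is an ideal, so it contains `⟨x⟩` as soon
as it contains `x`. -/
theorem isZeroDivPair_iff {x y : L} :
    IsZeroDivPair R x y ↔ x ≠ 0 ∧ y ≠ 0 ∧ ∀ b ∈ lieIdealGen R y, ⁅x, b⁆ = 0 := by
  refine and_congr_right fun _ => and_congr_right fun _ =>
    ⟨fun h b hb => h x (mem_lieIdealGen_self x) b hb, fun h a ha b hb => ?_⟩
  have hx : x ∈ LieModule.ker R L (lieIdealGen R y) :=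
    (LieModule.mem_ker R L _ x).2 fun b => Subtype.ext (h b b.2)
  exact congrArg Subtype.val
    ((LieModule.mem_ker R L _ a).1 (lieIdealGen_le_iff.2 hx ha) ⟨b, hb⟩)

theorem IsZeroDivPair.symm {x y : L} (h : IsZeroDivPair R x y) : IsZeroDivPair R y x :=
  ⟨h.2.1, h.1, fun a ha b hb => by rw [← lie_skew, h.2.2 b hb a ha, neg_zero]⟩

theorem lie_mem_commutant (a b : L) : ⁅a, b⁆ ∈ commutant R L :=
  LieSubmodule.lie_mem_lie (LieSubmodule.mem_top a) (LieSubmodule.mem_top b)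

theorem commutant_eq_bot_iff : commutant R L = ⊥ ↔ ∀ x y : L, ⁅x, y⁆ = 0 := by
  simp only [commutant, LieSubmodule.lie_eq_bot_iff, LieSubmodule.mem_top, forall_const]

theorem commutant_toSubmodule_le_of_lie_mem {p : Submodule R L} (h : ∀ a b : L, ⁅a, b⁆ ∈ p) :
    (commutant R L).toSubmodule ≤ p := by
  rw [commutant, LieSubmodule.lieIdeal_oper_eq_linear_span', Submodule.span_le]
  rintro _ ⟨a, -, b, -, rfl⟩
  exact h a b

/-- Every submodule containing `A²` is an ideal. -/
theorem lieIdealGen_toSubmodule_le_span_sup_commutant (y : L) :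
    (lieIdealGen R y).toSubmodule ≤ R ∙ y ⊔ (commutant R L).toSubmodule := by
  let J : LieIdeal R L :=
    { toSubmodule := R ∙ y ⊔ (commutant R L).toSubmodule
      lie_mem := fun _ => Submodule.mem_sup_right (lie_mem_commutant _ _) }
  exact (lieIdealGen_le_iff (I := J)).2
    (Submodule.mem_sup_left (Submodule.mem_span_singleton_self y))

namespace IsMetabelianLie

theorem lie_eq_zero_of_mem_commutant (hL : IsMetabelianLie L) {x y : L}
    (hx : x ∈ commutant R L) (hy : y ∈ commutant R L) : ⁅x, y⁆ = 0 := by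
  have hx_comm : ∀ c d : L, ⁅x, ⁅c, d⁆⁆ = 0 := fun c d => by
    have : x ∈ LinearMap.ker (LieAlgebra.ad R L ⁅c, d⁆) :=
      commutant_toSubmodule_le_of_lie_mem (fun a b => hL c d a b) hx
    rw [← lie_skew, ← LieAlgebra.ad_apply R, LinearMap.mem_ker.1 this, neg_zero]
  exact commutant_toSubmodule_le_of_lie_mem (p := LinearMap.ker (LieAlgebra.ad R L x)) hx_comm hy

/-- `⟨y⟩ ⊆ R y + A²`, and `A²` is abelian. -/
theorem isZeroDivPair_of_lie_eq_zero (hL : IsMetabelianLie L) {x y : L}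
    (hx : x ∈ commutant R L) (hx₀ : x ≠ 0) (hy₀ : y ≠ 0) (hxy : ⁅x, y⁆ = 0) :
    IsZeroDivPair R x y := by
  refine isZeroDivPair_iff.2 ⟨hx₀, hy₀, fun b hb => ?_⟩
  obtain ⟨_, hty, c, hc, rfl⟩ :=
    Submodule.mem_sup.1 (lieIdealGen_toSubmodule_le_span_sup_commutant y hb)
  obtain ⟨t, rfl⟩ := Submodule.mem_span_singleton.1 hty
  rw [lie_add, lie_smul, hxy, smul_zero, zero_add, hL.lie_eq_zero_of_mem_commutant hx hc]

theorem commutant_subset_dSet (hL : IsMetabelianLie L) :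
    (commutant R L : Set L) ⊆ DSet R L := fun x hx =>
  or_iff_not_imp_left.2 fun hx₀ =>
    ⟨x, hL.isZeroDivPair_of_lie_eq_zero hx hx₀ hx₀ (lie_self x)⟩

end IsMetabelianLie

theorem mem_commutant_of_isZeroDivPair (hnab : ¬ ∀ x y : L, ⁅x, y⁆ = 0) (hlt : LTFree R L)
    {x y : L} (h : IsZeroDivPair R x y) : x ∈ commutant R L := by
  by_contra hx
  obtain ⟨hx₀, hy₀, hxy⟩ := isZeroDivPair_iff.1 h
  obtain ⟨-, -, hyx⟩ := isZeroDivPair_iff.1 h.symm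
  by_cases hy : y ∈ commutant R L
  · exact hlt y hy hy₀ x hx (hyx x (mem_lieIdealGen_self x))
  have hx_central : ∀ u : L, ⁅u, x⁆ = 0 := fun u => by
    by_contra hux
    refine hlt _ (lie_mem_commutant u x) hux y hy ?_
    rw [← lie_skew, hyx _ ((lieIdealGen R x).lie_mem (mem_lieIdealGen_self x)), neg_zero]
  exact hnab fun u v => by_contra fun huv =>
    hlt _ (lie_mem_commutant u v) huv x hx (hx_central _)

end

/-- a nonzero metabelian Lie algebra is a strict semidomain iff it is
nonabelian and its commutant is linear-torsion free. -/
theorem strictSemidomain_iff (k : Type*) [Field k] (A : Type*) [LieRing A] [LieAlgebra k A]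
    [Nontrivial A] (hA : IsMetabelianLie A) :
    DSet k A = (commutant k A : Set A) ↔
      (¬ ∀ x y : A, ⁅x, y⁆ = 0) ∧ LTFree k A := by
  refine ⟨fun hD => ⟨fun hab => ?_, fun x hx hx₀ y hy hxy => hy ?_⟩, fun ⟨hnab, hlt⟩ => ?_⟩
  · obtain ⟨x, hx₀⟩ := exists_ne (0 : A)
    have hx : x ∈ commutant k A :=
      hD.subset <| Or.inr ⟨x, isZeroDivPair_iff.2 ⟨hx₀, hx₀, fun b _ => hab x b⟩⟩
    rw [commutant_eq_bot_iff.2 hab] at hx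
    exact hx₀ hx
  · have hy₀ : y ≠ 0 := fun h => hy (h ▸ zero_mem _)
    exact hD.subset <| Or.inr ⟨x, (hA.isZeroDivPair_of_lie_eq_zero hx hx₀ hy₀ hxy).symm⟩
  · refine Set.Subset.antisymm ?_ hA.commutant_subset_dSet
    rintro x (rfl | ⟨y, hxy⟩)
    · exact zero_mem _
    · exact mem_commutant_of_isZeroDivPair hnab hlt hxy
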